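/- arXiv:1911.11020 — 3 statements merged into one kernel-verified Lean document; each statement's English description precedes it below -/
import Mathlib

section
/- Let d ≥ 1, a ∈ (0,2], and for x > 0 define f(x, R) = R^d/d + (x/a)(1 + R^{-2})^{a/2} for R > 0. Then f(x, ·) has a unique minimizer R = R(x) > 0 satisfying R^{d+a}(1+R²)^{1-a/2} = x; moreover x ↦ R(x) is monotone increasing, R(x) = x^{1/(d+a)}(1+o(1)) as x → 0⁺, and the minimal value φ(x) = f(x, R(x)) satisfies φ(x) = (1/d + 1/a) x^{d/(d+a)} (1+o(1)) as x → 0⁺ and φ(x) = (x/a)(1+o(1)) as x → +∞. -/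
/-!
With `u = 1 + R²` one has `∂_R f(x, R) = R^(d-1) (1 - x / g(R))`, where
`g(R) = R^(d+a) u^(1-a/2) = R^d u (1 + R^(-2))^(-a/2)`. The second form is a product of increasing
positive factors, so `g` is an increasing bijection of `(0, ∞)` (continuous, `g(0) = 0`,
`g(∞) = ∞`); hence `f(x, ·)` decreases before and increases after `R(x) = g⁻¹(x)`. At `x = g(r)`
each ratio of the asymptotic statements is an explicit function of `r = R(x)`, e.g.
`f(g(r), r) = r^d (1/d + u/a)`, and `R(x) → 0` as `x → 0⁺`, `R(x) → ∞` as `x → ∞`.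
-/

open Filter

/-- `f(x,R) = R^d/d + (x/a)(1+R^{-2})^{a/2}`. -/
noncomputable def fRad (d : ℕ) (a x R : ℝ) : ℝ :=
  R ^ (d : ℝ) / d + (x / a) * (1 + R ^ (-2 : ℝ)) ^ (a / 2)

namespace NashFunctional

open Set Topology

/-- The critical points of `fRad d a x` on `(0, ∞)` are the solutions of
`eulerLagrange d a R = x` (see `hasDerivAt_fRad`). -/
noncomputable def eulerLagrange (d : ℕ) (a R : ℝ) : ℝ :=
  R ^ ((d : ℝ) + a) * (1 + R ^ 2) ^ (1 - a / 2)

lemma apply_lt_of_hasDerivAt_neg_of_pos {f f' : ℝ → ℝ} {b c y : ℝ} (hc : b < c)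
    (hf : ∀ t ∈ Ioi b, HasDerivAt f (f' t) t) (hneg : ∀ t ∈ Ioo b c, f' t < 0)
    (hpos : ∀ t ∈ Ioi c, 0 < f' t) (hy : b < y) (hyc : y ≠ c) : f c < f y := by
  have hcont : ContinuousOn f (Ioi b) := fun t ht => (hf t ht).continuousAt.continuousWithinAt
  rcases hyc.lt_or_gt with hlt | hgt
  · refine strictAntiOn_of_deriv_neg (convex_Ioc b c) (hcont.mono Ioc_subset_Ioi_self)
      (fun t ht => ?_) ⟨hy, hlt.le⟩ ⟨hc, le_rfl⟩ hlt
    rw [interior_Ioc] at ht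
    rw [(hf t ht.1).deriv]
    exact hneg t ht
  · refine strictMonoOn_of_deriv_pos (convex_Ici c) (hcont.mono (Ici_subset_Ioi.2 hc))
      (fun t ht => ?_) self_mem_Ici hgt.le hgt
    rw [interior_Ici] at ht
    rw [(hf t (hc.trans ht)).deriv]
    exact hpos t ht

variable {d : ℕ} {a : ℝ}

lemma one_add_rpow_neg_two_rpow {r : ℝ} (hr : 0 < r) (c : ℝ) :
    (1 + r ^ (-2 : ℝ)) ^ c = (1 + r ^ 2) ^ c * r ^ (-2 * c) := by
  have h : 1 + r ^ (-2 : ℝ) = (1 + r ^ 2) * r ^ (-2 : ℝ) := by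
    rw [Real.rpow_neg hr.le, Real.rpow_two]
    field_simp
    ring
  rw [h, Real.mul_rpow (by positivity) (by positivity), ← Real.rpow_mul hr.le]

lemma eulerLagrange_mul_one_add_rpow_neg_two_rpow {r : ℝ} (hr : 0 < r) :
    eulerLagrange d a r * (1 + r ^ (-2 : ℝ)) ^ (a / 2) = r ^ (d : ℝ) * (1 + r ^ 2) := by
  have hu : 0 < 1 + r ^ 2 := by positivity
  rw [eulerLagrange, one_add_rpow_neg_two_rpow hr]
  -- all bases are positive: write every power as `exp (log _ * _)` and compare exponents
  conv_rhs => rw [← Real.exp_log hu]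
  simp only [Real.rpow_def_of_pos hr, Real.rpow_def_of_pos hu, ← Real.exp_add]
  rw [Real.exp_eq_exp]
  ring

lemma eulerLagrange_eq {r : ℝ} (hr : 0 < r) :
    eulerLagrange d a r = r ^ (d : ℝ) * (1 + r ^ 2) * (1 + r ^ (-2 : ℝ)) ^ (-(a / 2)) := by
  rw [← eulerLagrange_mul_one_add_rpow_neg_two_rpow hr, mul_assoc, ← Real.rpow_add (by positivity),
    add_neg_cancel, Real.rpow_zero, mul_one]

lemma eulerLagrange_pos {r : ℝ} (hr : 0 < r) : 0 < eulerLagrange d a r := by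
  unfold eulerLagrange; positivity

lemma eulerLagrange_zero (ha : 0 < a) : eulerLagrange d a 0 = 0 := by
  rw [eulerLagrange, Real.zero_rpow (by positivity), zero_mul]

lemma eulerLagrange_strictMonoOn (ha : 0 < a) : StrictMonoOn (eulerLagrange d a) (Ioi 0) := by
  intro r (hr : 0 < r) s (hs : 0 < s) hrs
  rw [eulerLagrange_eq hr, eulerLagrange_eq hs]
  have hpoly : r ^ (d : ℝ) * (1 + r ^ 2) < s ^ (d : ℝ) * (1 + s ^ 2) :=
    mul_lt_mul' (by gcongr) (by gcongr) (by positivity) (by positivity)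
  have hcorr : (1 + r ^ (-2 : ℝ)) ^ (-(a / 2)) ≤ (1 + s ^ (-2 : ℝ)) ^ (-(a / 2)) :=
    Real.rpow_le_rpow_of_nonpos (by positivity)
      (add_le_add_right (Real.rpow_le_rpow_of_nonpos (z := -2) hr hrs.le (by norm_num)) 1)
      (by linarith)
  exact mul_lt_mul hpoly hcorr (by positivity) (by positivity)

lemma continuous_eulerLagrange (ha : 0 < a) : Continuous (eulerLagrange d a) :=
  (Real.continuous_rpow_const (by positivity)).mul
    ((by fun_prop : Continuous fun r : ℝ => 1 + r ^ 2).rpow_const fun _ => Or.inl (by positivity))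

lemma tendsto_one_add_rpow_neg_two_rpow_atTop (c : ℝ) :
    Tendsto (fun r : ℝ => (1 + r ^ (-2 : ℝ)) ^ c) atTop (𝓝 1) := by
  have h : Tendsto (fun r : ℝ => 1 + r ^ (-2 : ℝ)) atTop (𝓝 1) := by
    simpa using (tendsto_rpow_neg_atTop two_pos).const_add 1
  simpa using h.rpow_const (Or.inl one_ne_zero)

lemma tendsto_eulerLagrange_atTop : Tendsto (eulerLagrange d a) atTop atTop := by
  have hsq : Tendsto (fun r : ℝ => 1 + r ^ 2) atTop atTop :=
    tendsto_atTop_add_const_left _ _ (tendsto_pow_atTop two_ne_zero)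
  have hpoly : Tendsto (fun r : ℝ => r ^ (d : ℝ) * (1 + r ^ 2)) atTop atTop := by
    refine tendsto_atTop_mono' _ ?_ hsq
    filter_upwards [eventually_ge_atTop 1] with r hr
    exact le_mul_of_one_le_left (by positivity) (Real.one_le_rpow hr (by positivity))
  refine (hpoly.atTop_mul_pos one_pos
    (tendsto_one_add_rpow_neg_two_rpow_atTop (-(a / 2)))).congr' ?_
  filter_upwards [eventually_gt_atTop 0] with r hr
  exact (eulerLagrange_eq hr).symm

lemma surjOn_eulerLagrange (ha : 0 < a) : SurjOn (eulerLagrange d a) (Ioi 0) (Ioi 0) := by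
  intro x (hx : 0 < x)
  have hx0 : eulerLagrange d a 0 ≤ x := by rw [eulerLagrange_zero ha]; exact hx.le
  obtain ⟨r, hr, hrx⟩ := intermediate_value_Ici (continuous_eulerLagrange ha).continuousOn
    tendsto_eulerLagrange_atTop hx0
  refine ⟨r, show 0 < r from lt_of_le_of_ne hr ?_, hrx⟩
  rintro rfl
  rw [eulerLagrange_zero ha] at hrx
  exact hx.ne hrx

noncomputable def optRadius (d : ℕ) (a x : ℝ) : ℝ :=
  Function.invFunOn (eulerLagrange d a) (Ioi 0) x

lemma optRadius_pos (ha : 0 < a) {x : ℝ} (hx : 0 < x) : 0 < optRadius d a x :=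
  Function.invFunOn_mem (surjOn_eulerLagrange ha hx)

lemma eulerLagrange_optRadius (ha : 0 < a) {x : ℝ} (hx : 0 < x) :
    eulerLagrange d a (optRadius d a x) = x :=
  Function.invFunOn_eq (surjOn_eulerLagrange ha hx)

lemma le_optRadius_iff (ha : 0 < a) {x r : ℝ} (hx : 0 < x) (hr : 0 < r) :
    r ≤ optRadius d a x ↔ eulerLagrange d a r ≤ x := by
  conv_rhs => rw [← eulerLagrange_optRadius (d := d) ha hx]
  exact ((eulerLagrange_strictMonoOn ha).le_iff_le hr (optRadius_pos ha hx)).symm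

lemma optRadius_monotoneOn (ha : 0 < a) : MonotoneOn (optRadius d a) (Ioi 0) := by
  intro x (hx : 0 < x) y (hy : 0 < y) hxy
  rwa [le_optRadius_iff ha hy (optRadius_pos ha hx), eulerLagrange_optRadius ha hx]

lemma tendsto_optRadius_nhdsGT_zero (ha : 0 < a) : Tendsto (optRadius d a) (𝓝[>] 0) (𝓝 0) := by
  refine tendsto_order.2 ⟨fun b hb => ?_, fun ε hε => ?_⟩
  · filter_upwards [self_mem_nhdsWithin] with x hx using hb.trans (optRadius_pos ha hx)
  · filter_upwards [self_mem_nhdsWithin,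
      nhdsWithin_le_nhds (Iio_mem_nhds (eulerLagrange_pos (d := d) (a := a) hε))] with x hx hxε
    exact lt_of_not_ge fun h => (le_optRadius_iff ha hx hε).1 h |>.not_gt hxε

lemma tendsto_optRadius_atTop (ha : 0 < a) : Tendsto (optRadius d a) atTop atTop := by
  refine tendsto_atTop.2 fun M => ?_
  have hM : 0 < max M 1 := lt_max_of_lt_right one_pos
  filter_upwards [eventually_ge_atTop (eulerLagrange d a (max M 1))] with x hx
  have hx0 : 0 < x := (eulerLagrange_pos hM).trans_le hx
  exact (le_max_left M 1).trans ((le_optRadius_iff ha hx0 hM).2 hx)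

lemma rpow_neg_three_mul_mul_eulerLagrange {r : ℝ} (hr : 0 < r) :
    r ^ ((-2 : ℝ) - 1) * (1 + r ^ (-2 : ℝ)) ^ (a / 2 - 1) * eulerLagrange d a r =
      r ^ ((d : ℝ) - 1) := by
  have hu : 0 < 1 + r ^ 2 := by positivity
  rw [one_add_rpow_neg_two_rpow hr, eulerLagrange]
  simp only [Real.rpow_def_of_pos hr, Real.rpow_def_of_pos hu, ← Real.exp_add]
  rw [Real.exp_eq_exp]
  ring

lemma hasDerivAt_fRad (hd : d ≠ 0) (ha : a ≠ 0) {x r : ℝ} (hr : 0 < r) :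
    HasDerivAt (fRad d a x) (r ^ ((d : ℝ) - 1) * (1 - x / eulerLagrange d a r)) r := by
  have hpow : HasDerivAt (fun s : ℝ => s ^ (d : ℝ) / d) ((d : ℝ) * r ^ ((d : ℝ) - 1) / d) r :=
    (Real.hasDerivAt_rpow_const (Or.inl hr.ne')).div_const _
  have hcorr : HasDerivAt (fun s : ℝ => (1 + s ^ (-2 : ℝ)) ^ (a / 2))
      (-2 * r ^ ((-2 : ℝ) - 1) * (a / 2) * (1 + r ^ (-2 : ℝ)) ^ (a / 2 - 1)) r :=
    ((Real.hasDerivAt_rpow_const (Or.inl hr.ne')).const_add 1).rpow_const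
      (Or.inl (by positivity))
  refine (hpow.add (hcorr.const_mul (x / a))).congr_deriv ?_
  have hg := (eulerLagrange_pos (d := d) (a := a) hr).ne'
  rw [mul_div_cancel_left₀ _ (Nat.cast_ne_zero.2 hd), ← rpow_neg_three_mul_mul_eulerLagrange hr]
  generalize r ^ ((-2 : ℝ) - 1) = K
  generalize (1 + r ^ (-2 : ℝ)) ^ (a / 2 - 1) = W
  field_simp
  ring

lemma fRad_optRadius_lt (hd : d ≠ 0) (ha : 0 < a) {x y : ℝ} (hx : 0 < x) (hy : 0 < y)
    (hyx : y ≠ optRadius d a x) : fRad d a x (optRadius d a x) < fRad d a x y := by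
  have hR := optRadius_pos (d := d) ha hx
  have hmono := eulerLagrange_strictMonoOn (d := d) ha
  refine apply_lt_of_hasDerivAt_neg_of_pos hR (fun t ht => hasDerivAt_fRad hd ha.ne' ht)
    (fun t ht => ?_) (fun t ht => ?_) hy hyx
  · have hlt : eulerLagrange d a t < x :=
      eulerLagrange_optRadius ha hx ▸ hmono ht.1 hR ht.2
    exact mul_neg_of_pos_of_neg (Real.rpow_pos_of_pos ht.1 _)
      (sub_neg.2 ((one_lt_div (eulerLagrange_pos ht.1)).2 hlt))
  · have ht0 : 0 < t := hR.trans ht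
    have hlt : x < eulerLagrange d a t :=
      eulerLagrange_optRadius ha hx ▸ hmono hR ht0 ht
    exact mul_pos (Real.rpow_pos_of_pos ht0 _)
      (sub_pos.2 ((div_lt_one (eulerLagrange_pos ht0)).2 hlt))

lemma eulerLagrange_rpow {r : ℝ} (hr : 0 < r) (s : ℝ) :
    eulerLagrange d a r ^ s = r ^ (((d : ℝ) + a) * s) * (1 + r ^ 2) ^ ((1 - a / 2) * s) := by
  rw [eulerLagrange, Real.mul_rpow (by positivity) (by positivity), ← Real.rpow_mul hr.le,
    ← Real.rpow_mul (by positivity)]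

lemma fRad_eulerLagrange {r : ℝ} (hr : 0 < r) :
    fRad d a (eulerLagrange d a r) r = r ^ (d : ℝ) * (1 / d + (1 + r ^ 2) / a) := by
  rw [fRad, div_mul_eq_mul_div, eulerLagrange_mul_one_add_rpow_neg_two_rpow hr]
  ring

lemma div_eulerLagrange_rpow (ha : 0 < a) {r : ℝ} (hr : 0 < r) :
    r / eulerLagrange d a r ^ (1 / ((d : ℝ) + a)) =
      ((1 + r ^ 2) ^ ((1 - a / 2) * (1 / ((d : ℝ) + a))))⁻¹ := by
  rw [eulerLagrange_rpow hr, mul_one_div_cancel (by positivity), Real.rpow_one,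
    div_mul_cancel_left₀ hr.ne']

lemma fRad_eulerLagrange_div_rpow (ha : 0 < a) {r : ℝ} (hr : 0 < r) :
    fRad d a (eulerLagrange d a r) r / eulerLagrange d a r ^ ((d : ℝ) / ((d : ℝ) + a)) =
      (1 / d + (1 + r ^ 2) / a) / (1 + r ^ 2) ^ ((1 - a / 2) * ((d : ℝ) / ((d : ℝ) + a))) := by
  rw [fRad_eulerLagrange hr, eulerLagrange_rpow hr,
    mul_div_cancel₀ _ (by positivity : (d : ℝ) + a ≠ 0), mul_div_mul_left _ _ (by positivity)]

lemma fRad_eulerLagrange_div (hd : d ≠ 0) (ha : 0 < a) {r : ℝ} (hr : 0 < r) :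
    fRad d a (eulerLagrange d a r) r / (eulerLagrange d a r / a) =
      (a / (d * (1 + r ^ 2)) + 1) * (1 + r ^ (-2 : ℝ)) ^ (a / 2) := by
  have hprod := eulerLagrange_mul_one_add_rpow_neg_two_rpow (d := d) (a := a) hr
  have hg := (eulerLagrange_pos (d := d) (a := a) hr).ne'
  have hd' : (d : ℝ) ≠ 0 := Nat.cast_ne_zero.2 hd
  rw [fRad_eulerLagrange hr, div_eq_iff (div_ne_zero hg ha.ne')]
  field_simp
  linear_combination -hprod

lemma tendsto_comp_optRadius (ha : 0 < a) {H : ℝ → ℝ → ℝ} {F : ℝ → ℝ} {l l' l'' : Filter ℝ}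
    (hl : ∀ᶠ x in l, 0 < x) (hH : ∀ r, 0 < r → H (eulerLagrange d a r) r = F r)
    (hR : Tendsto (optRadius d a) l l') (hF : Tendsto F l' l'') :
    Tendsto (fun x => H x (optRadius d a x)) l l'' := by
  refine (hF.comp hR).congr' ?_
  filter_upwards [hl] with x hx
  rw [Function.comp_apply, ← hH _ (optRadius_pos ha hx), eulerLagrange_optRadius ha hx]

lemma tendsto_optRadius_div_rpow (ha : 0 < a) :
    Tendsto (fun x => optRadius d a x / x ^ (1 / ((d : ℝ) + a))) (𝓝[>] 0) (𝓝 1) := by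
  have hF : ContinuousAt (fun r : ℝ => ((1 + r ^ 2) ^ ((1 - a / 2) * (1 / ((d : ℝ) + a))))⁻¹) 0 :=
    ((ContinuousAt.rpow_const (by fun_prop) (Or.inl (by norm_num))).inv₀ (by norm_num))
  exact tendsto_comp_optRadius (H := fun x r => r / x ^ (1 / ((d : ℝ) + a))) ha
    self_mem_nhdsWithin (fun r hr => div_eulerLagrange_rpow ha hr)
    (tendsto_optRadius_nhdsGT_zero ha) (by simpa using hF.tendsto)

lemma tendsto_fRad_optRadius_div_rpow (ha : 0 < a) :
    Tendsto (fun x => fRad d a x (optRadius d a x) / x ^ ((d : ℝ) / ((d : ℝ) + a)))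
      (𝓝[>] 0) (𝓝 (1 / d + 1 / a)) := by
  have hF : ContinuousAt (fun r : ℝ => (1 / d + (1 + r ^ 2) / a) /
      (1 + r ^ 2) ^ ((1 - a / 2) * ((d : ℝ) / ((d : ℝ) + a)))) 0 :=
    (by fun_prop : ContinuousAt (fun r : ℝ => 1 / (d : ℝ) + (1 + r ^ 2) / a) 0).div
      (ContinuousAt.rpow_const (by fun_prop) (Or.inl (by norm_num))) (by norm_num)
  exact tendsto_comp_optRadius
    (H := fun x r => fRad d a x r / x ^ ((d : ℝ) / ((d : ℝ) + a))) ha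
    self_mem_nhdsWithin (fun r hr => fRad_eulerLagrange_div_rpow ha hr)
    (tendsto_optRadius_nhdsGT_zero ha) (by simpa using hF.tendsto)

lemma tendsto_fRad_optRadius_div_atTop (hd : d ≠ 0) (ha : 0 < a) :
    Tendsto (fun x => fRad d a x (optRadius d a x) / (x / a)) atTop (𝓝 1) := by
  have hsq : Tendsto (fun r : ℝ => d * (1 + r ^ 2)) atTop atTop :=
    (tendsto_atTop_add_const_left _ _ (tendsto_pow_atTop two_ne_zero)).const_mul_atTop
      (Nat.cast_pos.2 (Nat.pos_of_ne_zero hd))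
  have hF := ((tendsto_const_nhds (x := a).div_atTop hsq).add_const 1).mul
    (tendsto_one_add_rpow_neg_two_rpow_atTop (a / 2))
  exact tendsto_comp_optRadius (H := fun x r => fRad d a x r / (x / a)) ha
    (eventually_gt_atTop 0) (fun r hr => fRad_eulerLagrange_div hd ha hr)
    (tendsto_optRadius_atTop ha) (by simpa using hF)

end NashFunctional

theorem minimization_of_nash_functional_general (d : ℕ) (hd : 1 ≤ d) (a : ℝ)
    (ha0 : 0 < a) :
    ∃ R : ℝ → ℝ,
      (∀ x, 0 < x → 0 < R x) ∧
      (∀ x, 0 < x → (R x) ^ ((d : ℝ) + a) * (1 + (R x) ^ 2) ^ (1 - a / 2) = x) ∧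
      (∀ x, 0 < x → ∀ R', 0 < R' → R' ≠ R x → fRad d a x (R x) < fRad d a x R') ∧
      MonotoneOn R (Set.Ioi 0) ∧
      Tendsto (fun x => R x / x ^ (1 / ((d : ℝ) + a))) (nhdsWithin 0 (Set.Ioi 0)) (nhds 1) ∧
      Tendsto (fun x => fRad d a x (R x) / x ^ ((d : ℝ) / ((d : ℝ) + a)))
        (nhdsWithin 0 (Set.Ioi 0)) (nhds (1 / d + 1 / a)) ∧
      Tendsto (fun x => fRad d a x (R x) / (x / a)) atTop (nhds 1) := by
  have hd0 : d ≠ 0 := Nat.one_le_iff_ne_zero.mp hd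
  exact ⟨NashFunctional.optRadius d a,
    fun _ hx => NashFunctional.optRadius_pos ha0 hx,
    fun _ hx => NashFunctional.eulerLagrange_optRadius ha0 hx,
    fun _ hx _ hy hyx => NashFunctional.fRad_optRadius_lt hd0 ha0 hx hy hyx,
    NashFunctional.optRadius_monotoneOn ha0,
    NashFunctional.tendsto_optRadius_div_rpow ha0,
    NashFunctional.tendsto_fRad_optRadius_div_rpow ha0,
    NashFunctional.tendsto_fRad_optRadius_div_atTop hd0 ha0⟩

/-- For each `x > 0` the function `R ↦ f(x,R)` has a unique minimizer `R(x) > 0`, which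
satisfies `R^{d+a}(1+R²)^{1-a/2} = x`; `x ↦ R(x)` is monotone increasing,
`R(x) = x^{1/(d+a)}(1+o(1))` as `x → 0⁺`, and the minimal value `φ(x) = f(x,R(x))` satisfies
`φ(x) = (1/d + 1/a) x^{d/(d+a)}(1+o(1))` as `x → 0⁺` and `φ(x) = (x/a)(1+o(1))` as
`x → +∞`. -/
theorem minimization_of_nash_functional (d : ℕ) (hd : 1 ≤ d) (a : ℝ)
    (ha0 : 0 < a) (ha2 : a ≤ 2) :
    ∃ R : ℝ → ℝ,
      (∀ x, 0 < x → 0 < R x) ∧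
      (∀ x, 0 < x → (R x) ^ ((d : ℝ) + a) * (1 + (R x) ^ 2) ^ (1 - a / 2) = x) ∧
      (∀ x, 0 < x → ∀ R', 0 < R' → R' ≠ R x → fRad d a x (R x) < fRad d a x R') ∧
      MonotoneOn R (Set.Ioi 0) ∧
      Tendsto (fun x => R x / x ^ (1 / ((d : ℝ) + a))) (nhdsWithin 0 (Set.Ioi 0)) (nhds 1) ∧
      Tendsto (fun x => fRad d a x (R x) / x ^ ((d : ℝ) / ((d : ℝ) + a)))
        (nhdsWithin 0 (Set.Ioi 0)) (nhds (1 / d + 1 / a)) ∧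
      Tendsto (fun x => fRad d a x (R x) / (x / a)) atTop (nhds 1) :=
  minimization_of_nash_functional_general d hd a ha0
end

section
/- Let F(v) = c_γ ⟨v⟩^{-(d+γ)} with γ > 0, and let b(v,v') be a nonnegative collision kernel satisfying b(v,v') ≥ Z^{-1} ⟨v⟩^{-β} ⟨v'⟩^{-β} for some Z > 0 and ∫ (b(v,v') - b(v',v)) F(v') dv' = 0 for all v. Then for every h ∈ L²(F dv), ∬ b(v,v') (h(v) - h(v'))² F(v) F(v') dv dv' ≥ Λ ∫ |h(v) - h̄_{-β}|² ⟨v⟩^{-β} F(v) dv, where Λ = (2/Z) ∫ ⟨v⟩^{-β} F dv and h̄_{-β} = (∫ h ⟨v⟩^{-β} F dv)/(∫ ⟨v⟩^{-β} F dv). -/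
open MeasureTheory
open scoped ENNReal

/-- `⟨v⟩ = √(1+|v|²)`. -/
noncomputable def jap {d : ℕ} (v : EuclideanSpace ℝ (Fin d)) : ℝ :=
  Real.sqrt (1 + ‖v‖ ^ 2)

/-! With `W = ⟨v⟩^{-β} F`, the lower bound on `b` dominates the Dirichlet form by `Z⁻¹` times
the one with the product kernel `W(v) W(v')`. For a product kernel, expanding the square gives
the exact identity `∬ W W' (h - h')² = 2 (∫ W) (∫ h² W) - 2 (∫ h W)² = 2 (∫ W) ∫ (h - h̄)² W`,
with `h̄` the `W`-weighted mean; when `h² W` is not integrable, both sides are infinite. -/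

section WeightedVariance

variable {α : Type*} [MeasurableSpace α] {μ : Measure α} {W h : α → ℝ}

lemma integrable_sq_sub_mul (hW : Integrable W μ) (hhW : Integrable (fun x => h x * W x) μ)
    (hh2W : Integrable (fun x => h x ^ 2 * W x) μ) (c : ℝ) :
    Integrable (fun x => (h x - c) ^ 2 * W x) μ :=
  ((hh2W.sub (hhW.const_mul (2 * c))).add (hW.const_mul (c ^ 2))).congr
    (.of_forall fun x => by simp only [Pi.add_apply, Pi.sub_apply]; ring)

lemma integral_sq_sub_mul (hW : Integrable W μ) (hhW : Integrable (fun x => h x * W x) μ)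
    (hh2W : Integrable (fun x => h x ^ 2 * W x) μ) (c : ℝ) :
    ∫ x, (h x - c) ^ 2 * W x ∂μ
      = ∫ x, h x ^ 2 * W x ∂μ - 2 * c * ∫ x, h x * W x ∂μ + c ^ 2 * ∫ x, W x ∂μ := by
  have hsub : Integrable (fun x => h x ^ 2 * W x - 2 * c * (h x * W x)) μ :=
    hh2W.sub (hhW.const_mul _)
  rw [← integral_const_mul, ← integral_const_mul, ← integral_sub hh2W (hhW.const_mul _),
    ← integral_add hsub (hW.const_mul _)]
  exact integral_congr_ae (.of_forall fun x => by ring)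

lemma lintegral_lintegral_mul_sq_sub_of_integrable (hW0 : ∀ x, 0 ≤ W x) (hW : Integrable W μ)
    (hhW : Integrable (fun x => h x * W x) μ) (hh2W : Integrable (fun x => h x ^ 2 * W x) μ) :
    ∫⁻ x, ∫⁻ y, ENNReal.ofReal (W x * W y * (h x - h y) ^ 2) ∂μ ∂μ
      = ENNReal.ofReal (2 * ((∫ x, W x ∂μ) * (∫ x, h x ^ 2 * W x ∂μ)
          - (∫ x, h x * W x ∂μ) ^ 2)) := by
  set m := ∫ x, W x ∂μ
  set s := ∫ x, h x * W x ∂μ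
  set q := ∫ x, h x ^ 2 * W x ∂μ
  have hinner : ∀ x, ∫⁻ y, ENNReal.ofReal (W x * W y * (h x - h y) ^ 2) ∂μ
      = ENNReal.ofReal (W x * ∫ y, (h y - h x) ^ 2 * W y ∂μ) := fun x => by
    rw [← integral_const_mul, ofReal_integral_eq_lintegral_ofReal
      ((integrable_sq_sub_mul hW hhW hh2W _).const_mul _)
      (.of_forall fun y => mul_nonneg (hW0 x) (mul_nonneg (sq_nonneg _) (hW0 y)))]
    exact lintegral_congr fun y => by ring_nf
  have hexpand : (fun x => W x * ∫ y, (h y - h x) ^ 2 * W y ∂μ)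
      = fun x => q * W x - 2 * s * (h x * W x) + m * (h x ^ 2 * W x) := by
    ext x
    rw [integral_sq_sub_mul hW hhW hh2W]
    ring
  have hsub : Integrable (fun x => q * W x - 2 * s * (h x * W x)) μ :=
    (hW.const_mul _).sub (hhW.const_mul _)
  have hint : Integrable (fun x => W x * ∫ y, (h y - h x) ^ 2 * W y ∂μ) μ := by
    rw [hexpand]
    exact hsub.add (hh2W.const_mul _)
  rw [lintegral_congr hinner, ← ofReal_integral_eq_lintegral_ofReal hint
    (.of_forall fun x => mul_nonneg (hW0 x)
      (integral_nonneg fun y => mul_nonneg (sq_nonneg _) (hW0 y))),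
    hexpand, integral_add hsub (hh2W.const_mul _), integral_sub (hW.const_mul _) (hhW.const_mul _),
    integral_const_mul, integral_const_mul, integral_const_mul]
  congr 1
  ring

lemma lintegral_ofReal_sq_sub_mul_eq_top (hW0 : ∀ x, 0 ≤ W x) (hW : Integrable W μ)
    (htop : ∫⁻ x, ENNReal.ofReal (h x ^ 2 * W x) ∂μ = ∞) (c : ℝ) :
    ∫⁻ x, ENNReal.ofReal ((h x - c) ^ 2 * W x) ∂μ = ∞ := by
  have hle : ∀ x, ENNReal.ofReal (h x ^ 2 * W x)
      ≤ 2 * ENNReal.ofReal ((h x - c) ^ 2 * W x) + ENNReal.ofReal (2 * c ^ 2 * W x) := fun x => by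
    rw [← ENNReal.ofReal_ofNat, ← ENNReal.ofReal_mul zero_le_two,
      ← ENNReal.ofReal_add (by have := hW0 x; positivity) (by have := hW0 x; positivity)]
    exact ENNReal.ofReal_le_ofReal (by nlinarith [hW0 x, sq_nonneg (h x - 2 * c)])
  have hfin : ∫⁻ x, ENNReal.ofReal (2 * c ^ 2 * W x) ∂μ ≠ ∞ :=
    (hW.const_mul _).lintegral_lt_top.ne
  have hbound := lintegral_mono (μ := μ) hle
  rw [htop, lintegral_add_right' _ (hW.const_mul _).aemeasurable.ennreal_ofReal,
    lintegral_const_mul' _ _ ENNReal.ofNat_ne_top, top_le_iff] at hbound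
  by_contra hne
  exact ENNReal.add_ne_top.2 ⟨ENNReal.mul_ne_top ENNReal.ofNat_ne_top hne, hfin⟩ hbound

lemma lintegral_lintegral_mul_sq_sub_eq_top (hW0 : ∀ x, 0 ≤ W x) (hW : Integrable W μ)
    (hm : 0 < ∫ x, W x ∂μ) (htop : ∫⁻ x, ENNReal.ofReal (h x ^ 2 * W x) ∂μ = ∞) :
    ∫⁻ x, ∫⁻ y, ENNReal.ofReal (W x * W y * (h x - h y) ^ 2) ∂μ ∂μ = ∞ := by
  have hinner : ∀ x, ∫⁻ y, ENNReal.ofReal (W x * W y * (h x - h y) ^ 2) ∂μ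
      = ENNReal.ofReal (W x) * ∞ := fun x => by
    rw [← lintegral_ofReal_sq_sub_mul_eq_top hW0 hW htop (h x),
      ← lintegral_const_mul' _ _ ENNReal.ofReal_ne_top]
    exact lintegral_congr fun y => by rw [← ENNReal.ofReal_mul (hW0 x)]; ring_nf
  rw [lintegral_congr hinner, lintegral_mul_const'' _ hW.aemeasurable.ennreal_ofReal,
    ← ofReal_integral_eq_lintegral_ofReal hW (.of_forall hW0),
    ENNReal.mul_top (ENNReal.ofReal_pos.2 hm).ne']

theorem lintegral_lintegral_mul_sq_sub_eq (hW0 : ∀ x, 0 ≤ W x) (hW : Integrable W μ)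
    (hm : 0 < ∫ x, W x ∂μ) (hh : AEStronglyMeasurable h μ)
    (hhW : Integrable (fun x => h x * W x) μ) :
    ∫⁻ x, ∫⁻ y, ENNReal.ofReal (W x * W y * (h x - h y) ^ 2) ∂μ ∂μ
      = ENNReal.ofReal (2 * ∫ x, W x ∂μ) *
          ∫⁻ x, ENNReal.ofReal ((h x - (∫ y, h y * W y ∂μ) / ∫ y, W y ∂μ) ^ 2 * W x) ∂μ := by
  by_cases hh2W : Integrable (fun x => h x ^ 2 * W x) μ
  · rw [lintegral_lintegral_mul_sq_sub_of_integrable hW0 hW hhW hh2W,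
      ← ofReal_integral_eq_lintegral_ofReal (integrable_sq_sub_mul hW hhW hh2W _)
        (.of_forall fun x => mul_nonneg (sq_nonneg _) (hW0 x)),
      integral_sq_sub_mul hW hhW hh2W, ← ENNReal.ofReal_mul (by positivity)]
    congr 1
    field_simp
    ring
  · have htop : ∫⁻ x, ENNReal.ofReal (h x ^ 2 * W x) ∂μ = ∞ := by
      by_contra hne
      exact hh2W ⟨(hh.pow 2).mul hW.aestronglyMeasurable,
        (hasFiniteIntegral_iff_ofReal (.of_forall fun x => mul_nonneg (sq_nonneg _) (hW0 x))).2
          (lt_top_iff_ne_top.2 hne)⟩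
    rw [lintegral_lintegral_mul_sq_sub_eq_top hW0 hW hm htop,
      lintegral_ofReal_sq_sub_mul_eq_top hW0 hW htop, ENNReal.mul_top (by positivity)]

lemma ofReal_mul_lintegral_lintegral_le {c : ℝ} (hc : 0 ≤ c) {w F : α → ℝ} {b : α → α → ℝ}
    (hF : ∀ x, 0 ≤ F x) (hb : ∀ x y, c * (w x * w y) ≤ b x y) :
    ENNReal.ofReal c * ∫⁻ x, ∫⁻ y, ENNReal.ofReal (w x * F x * (w y * F y) * (h x - h y) ^ 2) ∂μ ∂μ
      ≤ ∫⁻ x, ∫⁻ y, ENNReal.ofReal (b x y * ((h x - h y) ^ 2 * (F x * F y))) ∂μ ∂μ := by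
  simp_rw [← lintegral_const_mul' _ _ ENNReal.ofReal_ne_top, ← ENNReal.ofReal_mul hc]
  refine lintegral_mono fun x => lintegral_mono fun y => ENNReal.ofReal_le_ofReal ?_
  calc c * (w x * F x * (w y * F y) * (h x - h y) ^ 2)
      = c * (w x * w y) * ((h x - h y) ^ 2 * (F x * F y)) := by ring
    _ ≤ b x y * ((h x - h y) ^ 2 * (F x * F y)) :=
      mul_le_mul_of_nonneg_right (hb x y) (by have := hF x; have := hF y; positivity)

lemma MeasureTheory.AEStronglyMeasurable.of_mul_right {f g : α → ℝ}
    (hfg : AEStronglyMeasurable (fun x => f x * g x) μ) (hg : Measurable g) (hg0 : ∀ x, g x ≠ 0) :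
    AEStronglyMeasurable f μ :=
  (hfg.mul hg.inv.aestronglyMeasurable).congr
    (.of_forall fun x => mul_inv_cancel_right₀ (hg0 x) _)

end WeightedVariance

section JapaneseBracket

variable {d : ℕ}

lemma jap_pos (v : EuclideanSpace ℝ (Fin d)) : 0 < jap v :=
  Real.sqrt_pos.2 (by positivity)

lemma continuous_jap_rpow (s : ℝ) : Continuous fun v : EuclideanSpace ℝ (Fin d) => jap v ^ s :=
  (Real.continuous_sqrt.comp (continuous_const.add (continuous_norm.pow 2))).rpow_const
    fun v => .inl (jap_pos v).ne'

lemma integrable_jap_rpow_neg {r : ℝ} (hr : d < r) :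
    Integrable fun v : EuclideanSpace ℝ (Fin d) => jap v ^ (-r) := by
  refine (integrable_rpow_neg_one_add_norm_sq (by simpa using hr)).congr (.of_forall fun v => ?_)
  dsimp only
  rw [jap, Real.sqrt_eq_rpow, ← Real.rpow_mul (by positivity)]
  ring_nf

end JapaneseBracket

lemma rpow_pi_mul_Gamma_div_Gamma_pos {d γ : ℝ} (hd : 0 ≤ d) (hγ : 0 < γ) :
    0 < Real.pi ^ (-d / 2) * Real.Gamma ((d + γ) / 2) / Real.Gamma (γ / 2) := by
  have := Real.rpow_pos_of_pos Real.pi_pos (-d / 2)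
  have := Real.Gamma_pos_of_pos (show 0 < (d + γ) / 2 by positivity)
  have := Real.Gamma_pos_of_pos (half_pos hγ)
  positivity

theorem scattering_gap_general (d : ℕ) (γ β Z : ℝ) (hγ : 0 < γ) (hγβ : 0 < γ + β)
    (hZ : 0 < Z) (cγ : ℝ)
    (hc : cγ = Real.pi ^ (-(d : ℝ) / 2) * Real.Gamma (((d : ℝ) + γ) / 2) / Real.Gamma (γ / 2))
    (F : EuclideanSpace ℝ (Fin d) → ℝ)
    (hF : ∀ v, F v = cγ * jap v ^ (-((d : ℝ) + γ)))
    (b : EuclideanSpace ℝ (Fin d) → EuclideanSpace ℝ (Fin d) → ℝ)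
    (hblow : ∀ v v', Z⁻¹ * (jap v ^ (-β) * jap v' ^ (-β)) ≤ b v v')
    (h : EuclideanSpace ℝ (Fin d) → ℝ)
    (hL1w : Integrable (fun v => h v * jap v ^ (-β) * F v)) :
    ENNReal.ofReal ((2 / Z) * ∫ v, jap v ^ (-β) * F v) *
        ∫⁻ v, ENNReal.ofReal
          ((h v - (∫ w, h w * jap w ^ (-β) * F w) / (∫ w, jap w ^ (-β) * F w)) ^ 2
            * jap v ^ (-β) * F v)
      ≤ ∫⁻ v, ∫⁻ v', ENNReal.ofReal (b v v' * (h v - h v') ^ 2 * F v * F v') := by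
  have hFpos : ∀ v, 0 < F v := fun v => hF v ▸ mul_pos
    (hc ▸ rpow_pi_mul_Gamma_div_Gamma_pos d.cast_nonneg hγ) (Real.rpow_pos_of_pos (jap_pos v) _)
  have hW : ∀ v, jap v ^ (-β) * F v = cγ * jap v ^ (-((d : ℝ) + γ + β)) := fun v => by
    rw [hF, show -((d : ℝ) + γ + β) = -β + -((d : ℝ) + γ) by ring,
      Real.rpow_add (jap_pos v)]
    ring
  have hWpos : ∀ v, 0 < jap v ^ (-β) * F v := fun v =>
    mul_pos (Real.rpow_pos_of_pos (jap_pos v) _) (hFpos v)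
  have hWcont : Continuous fun v => jap v ^ (-β) * F v := by
    simpa only [hW] using (continuous_jap_rpow _).const_mul cγ
  have hWint : Integrable fun v => jap v ^ (-β) * F v := by
    simpa only [hW] using (integrable_jap_rpow_neg (by linarith)).const_mul cγ
  have hm : 0 < ∫ v, jap v ^ (-β) * F v :=
    integral_pos_of_integrable_nonneg_nonzero hWcont hWint (fun v => (hWpos v).le)
      (hWpos 0).ne'
  simp only [mul_assoc] at hL1w ⊢
  have hh : AEStronglyMeasurable h volume :=
    hL1w.aestronglyMeasurable.of_mul_right hWcont.measurable fun v => (hWpos v).ne'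
  rw [show ∀ m : ℝ, 2 / Z * m = Z⁻¹ * (2 * m) from fun m => by ring,
    ENNReal.ofReal_mul (inv_nonneg.2 hZ.le), mul_assoc,
    ← lintegral_lintegral_mul_sq_sub_eq (fun v => (hWpos v).le) hWint hm hh hL1w]
  exact ofReal_mul_lintegral_lintegral_le (inv_nonneg.2 hZ.le) (fun v => (hFpos v).le) hblow

/-- Spectral-gap inequality for the scattering operator: if `b(v,v') ≥ Z⁻¹⟨v⟩^{-β}⟨v'⟩^{-β}`
and local mass conservation holds, then
`∬ b (h-h')² F F' ≥ Λ ∫ |h - h̄_{-β}|² ⟨v⟩^{-β} F` with `Λ = (2/Z)∫⟨v⟩^{-β}F`. -/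
theorem scattering_gap (d : ℕ) (hd : 1 ≤ d) (γ β Z : ℝ) (hγ : 0 < γ) (hγβ : 0 < γ + β)
    (hZ : 0 < Z) (cγ : ℝ)
    (hc : cγ = Real.pi ^ (-(d : ℝ) / 2) * Real.Gamma (((d : ℝ) + γ) / 2) / Real.Gamma (γ / 2))
    (F : EuclideanSpace ℝ (Fin d) → ℝ)
    (hF : ∀ v, F v = cγ * jap v ^ (-((d : ℝ) + γ)))
    (b : EuclideanSpace ℝ (Fin d) → EuclideanSpace ℝ (Fin d) → ℝ)
    (hb0 : ∀ v v', 0 ≤ b v v')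
    (hblow : ∀ v v', Z⁻¹ * (jap v ^ (-β) * jap v' ^ (-β)) ≤ b v v')
    (hmass : ∀ v, (∫ v', (b v v' - b v' v) * F v') = 0)
    (h : EuclideanSpace ℝ (Fin d) → ℝ)
    (hL2 : Integrable (fun v => h v ^ 2 * F v))
    (hL1w : Integrable (fun v => h v * jap v ^ (-β) * F v)) :
    ENNReal.ofReal ((2 / Z) * ∫ v, jap v ^ (-β) * F v) *
        ∫⁻ v, ENNReal.ofReal
          ((h v - (∫ w, h w * jap w ^ (-β) * F w) / (∫ w, jap w ^ (-β) * F w)) ^ 2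
            * jap v ^ (-β) * F v)
      ≤ ∫⁻ v, ∫⁻ v', ENNReal.ofReal (b v v' * (h v - h v') ^ 2 * F v * F v') :=
  scattering_gap_general d γ β Z hγ hγβ hZ cγ hc F hF b hblow h hL1w
end

section
/- Let d ≥ 1, γ > 0 and F(v) = c_γ ⟨v⟩^{-(d+γ)}. For the Fokker-Planck operator L₁ f = ∇_v · (F ∇_v (F^{-1} f)), one has the explicit identity: F^{-1} L₁(F ⟨·⟩^k)(v) = k (d + γ - k + 2) ⟨v⟩^{k-4} - k (γ + 2 - k) ⟨v⟩^{k-2} for all v ∈ ℝ^d. Consequently, for any k ∈ (0, γ+2), there exist a ∈ ℝ, b > 0, R > 0 such that F^{-1} L₁(F ⟨·⟩^k)(v) ≤ (a 1_{B_R}(v) - b ⟨v⟩^{-2}) ⟨v⟩^k for all v. -/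
open MeasureTheory

/-- The divergence of a vector field on `ℝ^d`. -/
noncomputable def diverg {d : ℕ} (G : EuclideanSpace ℝ (Fin d) → EuclideanSpace ℝ (Fin d))
    (v : EuclideanSpace ℝ (Fin d)) : ℝ :=
  ∑ i : Fin d, fderiv ℝ (fun w => G w i) v (EuclideanSpace.single i 1)

/-!
With `F = c ⟨v⟩^{-(d+γ)}` and `∇⟨v⟩^k = k ⟨v⟩^{k-2} v`, the field `F ∇⟨·⟩^k` is radial,
`φ v • v` with `φ = c k ⟨·⟩^{k-2-(d+γ)}`, and `div (φ v • v) = d φ + Dφ v`; substituting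
`|v|² = ⟨v⟩² - 1` gives the identity. For `0 < k < γ + 2` both of its coefficients are positive;
half of the negative `⟨v⟩^{k-2}` term absorbs the positive `⟨v⟩^{k-4}` term outside a large ball,
and inside the ball the latter is bounded by a multiple of `⟨v⟩^k`.
-/

namespace FokkerPlanck

variable {d : ℕ}

theorem diverg_smul_self {φ : EuclideanSpace ℝ (Fin d) → ℝ}
    {φ' : EuclideanSpace ℝ (Fin d) →L[ℝ] ℝ} {v : EuclideanSpace ℝ (Fin d)}
    (hφ : HasFDerivAt φ φ' v) :
    diverg (fun w => φ w • w) v = d * φ v + φ' v := by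
  have hcoord : ∀ i : Fin d, fderiv ℝ (fun w => φ w * w i) v (EuclideanSpace.single i 1)
      = φ v + v i * φ' (EuclideanSpace.single i 1) := by
    intro i
    have hmul : HasFDerivAt (fun w : EuclideanSpace ℝ (Fin d) => φ w * w i)
        (φ v • EuclideanSpace.proj i + v i • φ') v :=
      hφ.mul (EuclideanSpace.proj (𝕜 := ℝ) i).hasFDerivAt
    simp [hmul.fderiv]
  have hφ'v : φ' v = ∑ i, v i * φ' (EuclideanSpace.single i 1) := by
    conv_lhs => rw [← (EuclideanSpace.basisFun (Fin d) ℝ).sum_repr v]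
    simp
  simp [diverg, hcoord, Finset.sum_add_distrib, hφ'v]

theorem jap_pos (v : EuclideanSpace ℝ (Fin d)) : 0 < jap v := by
  unfold jap; positivity

theorem jap_sq (v : EuclideanSpace ℝ (Fin d)) : jap v ^ 2 = 1 + ‖v‖ ^ 2 :=
  Real.sq_sqrt (by positivity)

theorem norm_le_jap (v : EuclideanSpace ℝ (Fin d)) : ‖v‖ ≤ jap v :=
  Real.le_sqrt_of_sq_le (by linarith)

theorem one_le_jap (v : EuclideanSpace ℝ (Fin d)) : 1 ≤ jap v :=
  Real.le_sqrt_of_sq_le (by nlinarith [sq_nonneg ‖v‖])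

theorem jap_rpow (v : EuclideanSpace ℝ (Fin d)) (p : ℝ) :
    jap v ^ p = (1 + ‖v‖ ^ 2) ^ (p / 2) := by
  rw [jap, Real.sqrt_eq_rpow, ← Real.rpow_mul (by positivity)]
  ring_nf

theorem jap_rpow_add_nat (v : EuclideanSpace ℝ (Fin d)) (p : ℝ) (n : ℕ) :
    jap v ^ (p + n) = jap v ^ p * jap v ^ n := by
  rw [Real.rpow_add (jap_pos v), Real.rpow_natCast]

theorem hasFDerivAt_jap_rpow (p : ℝ) (v : EuclideanSpace ℝ (Fin d)) :
    HasFDerivAt (fun z => jap z ^ p) ((p * jap v ^ (p - 2)) • innerSL ℝ v) v := by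
  have hsq : HasFDerivAt (fun z : EuclideanSpace ℝ (Fin d) => 1 + ‖z‖ ^ 2)
      (2 • innerSL ℝ v) v := by
    simpa using ((hasFDerivAt_id v).norm_sq).const_add 1
  have hpow := (Real.hasDerivAt_rpow_const (p := p / 2)
    (Or.inl (by positivity : (1 + ‖v‖ ^ 2 : ℝ) ≠ 0))).comp_hasFDerivAt v hsq
  simp only [jap_rpow]
  refine hpow.congr_fderiv ?_
  ext w
  simp only [smul_apply, innerSL_apply_apply, smul_eq_mul, nsmul_eq_mul]
  rw [show (p - 2) / 2 = p / 2 - 1 by ring]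
  ring

theorem gradient_jap_rpow (p : ℝ) (v : EuclideanSpace ℝ (Fin d)) :
    gradient (fun z => jap z ^ p) v = (p * jap v ^ (p - 2)) • v := by
  refine HasGradientAt.gradient ?_
  rw [hasGradientAt_iff_hasFDerivAt]
  refine (hasFDerivAt_jap_rpow p v).congr_fderiv ?_
  ext w
  simp

theorem diverg_jap_rpow_smul_self (c p : ℝ) (v : EuclideanSpace ℝ (Fin d)) :
    diverg (fun w => (c * jap w ^ p) • w) v
      = c * jap v ^ (p - 2) * ((d + p) * jap v ^ 2 - p) := by
  rw [diverg_smul_self ((hasFDerivAt_jap_rpow p v).const_mul c)]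
  have hsplit : jap v ^ p = jap v ^ (p - 2) * jap v ^ 2 := by
    rw [← jap_rpow_add_nat]; norm_num
  simp only [smul_apply, innerSL_apply_apply, real_inner_self_eq_norm_sq,
    smul_eq_mul, hsplit, jap_sq]
  ring

theorem inv_mul_diverg_smul_gradient_jap_rpow (c γ k : ℝ) (hc : c ≠ 0)
    (v : EuclideanSpace ℝ (Fin d)) :
    (c * jap v ^ (-((d : ℝ) + γ)))⁻¹
        * diverg (fun w => (c * jap w ^ (-((d : ℝ) + γ))) • gradient (fun z => jap z ^ k) w) v
      = k * ((d : ℝ) + γ - k + 2) * jap v ^ (k - 4) - k * (γ + 2 - k) * jap v ^ (k - 2) := by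
  set q : ℝ := -((d : ℝ) + γ)
  have hfield : (fun w : EuclideanSpace ℝ (Fin d) => (c * jap w ^ q) • gradient (fun z => jap z ^ k) w)
      = fun w => (c * k * jap w ^ (q + k - 2)) • w := by
    funext w
    rw [gradient_jap_rpow, smul_smul, add_sub_assoc, Real.rpow_add (jap_pos w)]
    ring_nf
  have hpow : jap v ^ (q + k - 2 - 2) = jap v ^ q * jap v ^ (k - 4) := by
    rw [← Real.rpow_add (jap_pos v)]; ring_nf
  have hpow' : jap v ^ (k - 2) = jap v ^ (k - 4) * jap v ^ 2 := by
    rw [← jap_rpow_add_nat]; congr 1; push_cast; ring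
  have hq : jap v ^ q ≠ 0 := (Real.rpow_pos_of_pos (jap_pos v) q).ne'
  rw [hfield, diverg_jap_rpow_smul_self, hpow, hpow']
  field_simp
  ring

theorem exists_indicator_ball_bound_jap_rpow (k : ℝ) {A B : ℝ} (hA : 0 ≤ A) (hB : 0 < B) :
    ∃ a b R : ℝ, 0 < b ∧ 0 < R ∧ ∀ v : EuclideanSpace ℝ (Fin d),
      A * jap v ^ (k - 4) - B * jap v ^ (k - 2)
        ≤ (a * (Metric.ball (0 : EuclideanSpace ℝ (Fin d)) R).indicator (fun _ => (1 : ℝ)) v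
            - b * jap v ^ (-2 : ℝ)) * jap v ^ k := by
  refine ⟨A, B / 2, 2 * A / B + 1, by positivity, by positivity, fun v => ?_⟩
  have hs := one_le_jap v
  have ht : 0 < jap v ^ (k - 4) := Real.rpow_pos_of_pos (jap_pos v) _
  have hpow2 : jap v ^ (k - 2) = jap v ^ (k - 4) * jap v ^ 2 := by
    rw [← jap_rpow_add_nat]; congr 1; push_cast; ring
  have hpow4 : jap v ^ k = jap v ^ (k - 4) * jap v ^ 4 := by
    rw [← jap_rpow_add_nat]; congr 1; push_cast; ring
  have hinv : jap v ^ (-2 : ℝ) * jap v ^ 2 = 1 := by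
    rw [Real.rpow_neg (jap_pos v).le, Real.rpow_two, inv_mul_cancel₀ (by positivity)]
  have hrhs : ∀ a b : ℝ, (a - b * jap v ^ (-2 : ℝ)) * (jap v ^ (k - 4) * jap v ^ 4)
      = a * jap v ^ (k - 4) * jap v ^ 4 - b * jap v ^ (k - 4) * jap v ^ 2 := by
    intro a b; linear_combination (-b * jap v ^ (k - 4) * jap v ^ 2) * hinv
  rw [hpow2, hpow4, hrhs]
  by_cases hv : v ∈ Metric.ball 0 (2 * A / B + 1)
  · rw [Set.indicator_of_mem hv]
    nlinarith [mul_le_mul_of_nonneg_left (one_le_pow₀ (n := 4) hs) (mul_nonneg hA ht.le),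
      mul_pos (mul_pos hB ht) (pow_pos (jap_pos v) 2)]
  · rw [Set.indicator_of_notMem hv]
    have hR : 2 * A / B + 1 ≤ jap v := by
      simpa using (not_lt.mp (by simpa using hv)).trans (norm_le_jap v)
    have hA' : A ≤ B / 2 * jap v ^ 2 := by
      rw [div_add_one hB.ne', div_le_iff₀ hB] at hR
      nlinarith
    nlinarith [mul_le_mul_of_nonneg_left hA' ht.le]

end FokkerPlanck

open FokkerPlanck in
theorem fokker_planck_lyapunov_general (d : ℕ) (γ : ℝ) (hγ : 0 < γ) (cγ : ℝ)
    (hc : cγ = Real.pi ^ (-(d : ℝ) / 2) * Real.Gamma (((d : ℝ) + γ) / 2) / Real.Gamma (γ / 2))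
    (F : EuclideanSpace ℝ (Fin d) → ℝ)
    (hF : ∀ v, F v = cγ * jap v ^ (-((d : ℝ) + γ))) :
    (∀ k : ℝ, ∀ v,
      (F v)⁻¹ * diverg (fun w => F w • gradient (fun z => jap z ^ k) w) v
        = k * ((d : ℝ) + γ - k + 2) * jap v ^ (k - 4) - k * (γ + 2 - k) * jap v ^ (k - 2)) ∧
    (∀ k : ℝ, 0 < k → k < γ + 2 → ∃ a b R : ℝ, 0 < b ∧ 0 < R ∧ ∀ v,
      (F v)⁻¹ * diverg (fun w => F w • gradient (fun z => jap z ^ k) w) v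
        ≤ (a * (Metric.ball (0 : EuclideanSpace ℝ (Fin d)) R).indicator (fun _ => (1 : ℝ)) v
            - b * jap v ^ (-2 : ℝ)) * jap v ^ k) := by
  have hcγ : cγ ≠ 0 := by
    rw [hc]
    exact (div_pos (mul_pos (Real.rpow_pos_of_pos Real.pi_pos _)
      (Real.Gamma_pos_of_pos (by positivity))) (Real.Gamma_pos_of_pos (by positivity))).ne'
  obtain rfl : F = fun v => cγ * jap v ^ (-((d : ℝ) + γ)) := funext hF
  have hidentity k := inv_mul_diverg_smul_gradient_jap_rpow (d := d) cγ γ k hcγ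
  refine ⟨hidentity, fun k hk hkγ => ?_⟩
  obtain ⟨a, b, R, hb, hR, hbound⟩ := exists_indicator_ball_bound_jap_rpow (d := d) k
    (A := k * ((d : ℝ) + γ - k + 2)) (B := k * (γ + 2 - k))
    (mul_nonneg hk.le (by linarith [d.cast_nonneg (α := ℝ)])) (mul_pos hk (by linarith))
  exact ⟨a, b, R, hb, hR, fun v => (hidentity k v).trans_le (hbound v)⟩

/-- For the Fokker–Planck operator `L₁ f = ∇·(F ∇(F⁻¹ f))` with `F = c_γ⟨v⟩^{-(d+γ)}`:
`F⁻¹ L₁(F⟨·⟩^k)(v) = k(d+γ-k+2)⟨v⟩^{k-4} - k(γ+2-k)⟨v⟩^{k-2}`, and consequently for any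
`k ∈ (0,γ+2)` there are `a ∈ ℝ`, `b > 0`, `R > 0` with
`F⁻¹ L₁(F⟨·⟩^k)(v) ≤ (a 1_{B_R}(v) - b⟨v⟩^{-2})⟨v⟩^k`. -/
theorem fokker_planck_lyapunov (d : ℕ) (hd : 1 ≤ d) (γ : ℝ) (hγ : 0 < γ) (cγ : ℝ)
    (hc : cγ = Real.pi ^ (-(d : ℝ) / 2) * Real.Gamma (((d : ℝ) + γ) / 2) / Real.Gamma (γ / 2))
    (F : EuclideanSpace ℝ (Fin d) → ℝ)
    (hF : ∀ v, F v = cγ * jap v ^ (-((d : ℝ) + γ))) :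
    (∀ k : ℝ, ∀ v,
      (F v)⁻¹ * diverg (fun w => F w • gradient (fun z => jap z ^ k) w) v
        = k * ((d : ℝ) + γ - k + 2) * jap v ^ (k - 4) - k * (γ + 2 - k) * jap v ^ (k - 2)) ∧
    (∀ k : ℝ, 0 < k → k < γ + 2 → ∃ a b R : ℝ, 0 < b ∧ 0 < R ∧ ∀ v,
      (F v)⁻¹ * diverg (fun w => F w • gradient (fun z => jap z ^ k) w) v
        ≤ (a * (Metric.ball (0 : EuclideanSpace ℝ (Fin d)) R).indicator (fun _ => (1 : ℝ)) v
            - b * jap v ^ (-2 : ℝ)) * jap v ^ k) :=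
  fokker_planck_lyapunov_general d γ hγ cγ hc F hF
end
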